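/- Let n ≥ 1 and ϖ ≥ 1 be integers, let m ∈ S_ϖ satisfy m_j ≥ 0 for all j and m ≠ 0, and let c ∈ ℝⁿ satisfy |c_j| < 1 for all j. Set s = m ∘ c (componentwise product). Then m is not an element of minimal Euclidean norm of S_{≥|s|} ∩ S_ϖ: there exists x ∈ S_{≥|s|} ∩ S_ϖ with ‖x‖₂ < ‖m‖₂. -/
import Mathlib


open scoped BigOperators

noncomputable section

/-- Low-frequency index set `K_ω ⊆ {0,…,n−1}`. -/
def Kset (n ω : ℕ) : Set (Fin n) := {k | (k : ℕ) ≤ ω - 1 ∨ n - ω + 1 ≤ (k : ℕ)}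

/-- The set of ω-bandlimited real vectors `S_ω`. -/
def Sband (n ω : ℕ) : Set (EuclideanSpace ℝ (Fin n)) :=
  {x | ∀ k : Fin n, k ∉ Kset n ω →
    ∑ j : Fin n, (x j : ℂ) *
      Complex.exp (-(2 * (Real.pi : ℂ) * Complex.I * ((j : ℕ) : ℂ) * ((k : ℕ) : ℂ)) / (n : ℂ)) = 0}

/-- The constraint set `S_{≥|s|}`. -/
def Sgeq (n : ℕ) (s : EuclideanSpace ℝ (Fin n)) : Set (EuclideanSpace ℝ (Fin n)) :=
  {x | ∀ j, |s j| ≤ x j}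

/-- if all carrier components satisfy `|c_j| < 1`, then the true modulator
is not a minimal-norm element of `S_{≥|s|} ∩ S_ϖ`. -/
theorem modulator_not_minimal_of_carrier_lt_one
    (n ϖ : ℕ) (hn : 1 ≤ n) (hϖ : 1 ≤ ϖ)
    (m c : EuclideanSpace ℝ (Fin n))
    (hm : m ∈ Sband n ϖ) (hm0 : ∀ j, 0 ≤ m j) (hmne : m ≠ 0)
    (hc : ∀ j, |c j| < 1)
    (s : EuclideanSpace ℝ (Fin n)) (hs : ∀ j, s j = m j * c j) :
    ∃ x ∈ Sgeq n s ∩ Sband n ϖ, ‖x‖ < ‖m‖ := by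
  have hinst : Nonempty (Fin n) := ⟨⟨0, hn⟩⟩
  have hne : (Finset.univ : Finset (Fin n)).Nonempty := Finset.univ_nonempty
  set t := Finset.univ.sup' hne (fun j => |c j|) with ht
  have ht1 : t < 1 := (Finset.sup'_lt_iff hne).mpr (fun j _ => hc j)
  have ht0 : 0 ≤ t :=
    le_trans (abs_nonneg _) (Finset.le_sup' (fun j => |c j|) (Finset.mem_univ (⟨0, hn⟩ : Fin n)))
  refine ⟨t • m, ⟨?_, ?_⟩, ?_⟩
  · intro j
    rw [hs j, abs_mul, abs_of_nonneg (hm0 j)]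
    have hle : |c j| ≤ t := Finset.le_sup' (fun j => |c j|) (Finset.mem_univ j)
    calc m j * |c j| ≤ m j * t := mul_le_mul_of_nonneg_left hle (hm0 j)
      _ = (t • m) j := by simp [mul_comm]
  · intro k hk
    have h0 := hm k hk
    have : ∀ j : Fin n, ((t • m) j : ℂ) = (t : ℂ) * (m j : ℂ) := by
      intro j; simp
    simp only [this, mul_assoc, ← Finset.mul_sum]
    convert mul_zero (t : ℂ) using 2
    rw [← h0]
    exact Finset.sum_congr rfl (fun i _ => by ring_nf)
  · rw [norm_smul, Real.norm_eq_abs, abs_of_nonneg ht0]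
    have hmnorm : 0 < ‖m‖ := norm_pos_iff.mpr hmne
    calc t * ‖m‖ < 1 * ‖m‖ := mul_lt_mul_of_pos_right ht1 hmnorm
      _ = ‖m‖ := one_mul _
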